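/- arXiv:1902.02884 — 3 statements merged into one kernel-verified Lean document; each statement's English description precedes it below -/
import Mathlib

section
/- Let d, m ≥ 1. There exists a Borel-measurable map Σ from (Matrix (Fin d) (Fin m) ℝ) × (Matrix (Fin d) (Fin m) ℝ) to Matrix (Fin m) (Fin m) ℝ such that for every pair (σ, σ̄) of real d×m matrices with σσᵀ = σ̄σ̄ᵀ, the matrix U := Σ(σ, σ̄) satisfies UUᵀ = 1 and σU = σ̄. -/
/-!
Run Gram–Schmidt on the rows of `σ` followed by the standard basis of `ℝᵐ`. The nonzero outputs
form an orthonormal basis, so the frame `A` whose rows are the normalised outputs (some of them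
zero) satisfies `Aᵀ A = 1`, and `σ Aᵀ` holds the coefficients of the rows of `σ` in it. Every
Gram–Schmidt inner product among the first `d` vectors is a function of the Gram matrix, so when
`σσᵀ = σ'σ'ᵀ` the first `d` frame vectors of `σ` and `σ'` have the same coefficients and the same
zero pattern. The remaining frame vectors are orthonormal bases of complements of equal dimension;
a permutation chosen from the two zero patterns matches them. With `B` the permuted frame of `σ'`,
`U = Aᵀ B` is orthogonal and `σ U = σ'`. Gram–Schmidt is measurable and the zero patterns take
finitely many values, so `U` depends measurably on `(σ, σ')`.
-/

open Matrix

/-- The standard Borel σ-algebra on the space of real `d × m` matrices (viewed as a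
finite-dimensional real normed/topological space). -/
noncomputable instance matrixMeasurableSpace {d m : ℕ} :
    MeasurableSpace (Matrix (Fin d) (Fin m) ℝ) := borel _

open InnerProductSpace Finset

section GramSchmidt

variable {ι E F : Type*} [LinearOrder ι] [LocallyFiniteOrderBot ι] [WellFoundedLT ι]
  [NormedAddCommGroup E] [InnerProductSpace ℝ E] [NormedAddCommGroup F] [InnerProductSpace ℝ F]

theorem gramSchmidt_eq_sub_sum (f : ι → E) (n : ι) :
    gramSchmidt ℝ f n = f n - ∑ i ∈ Iio n,
      (⟪gramSchmidt ℝ f i, f n⟫_ℝ / ‖gramSchmidt ℝ f i‖ ^ 2) • gramSchmidt ℝ f i :=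
  eq_sub_of_add_eq (gramSchmidt_def'' ℝ f n).symm

theorem norm_gramSchmidt_sq (f : ι → E) (n : ι) :
    ‖gramSchmidt ℝ f n‖ ^ 2 = ⟪f n, gramSchmidt ℝ f n⟫_ℝ := by
  conv_rhs => rw [gramSchmidt_def'' ℝ f n]
  rw [inner_add_left, sum_inner, real_inner_self_eq_norm_sq, left_eq_add]
  refine sum_eq_zero fun i hi => ?_
  rw [real_inner_smul_left, gramSchmidt_orthogonal ℝ f (mem_Iio.1 hi).ne, mul_zero]

theorem inner_gramSchmidt_eq_of_inner_eq {s : Set ι} (hs : IsLowerSet s) {f : ι → E}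
    {g : ι → F} (h : ∀ i ∈ s, ∀ j ∈ s, ⟪f i, f j⟫_ℝ = ⟪g i, g j⟫_ℝ) {k : ι} (hk : k ∈ s) :
    ∀ j ∈ s, ⟪f j, gramSchmidt ℝ f k⟫_ℝ = ⟪g j, gramSchmidt ℝ g k⟫_ℝ := by
  induction k using WellFoundedLT.induction with
  | _ k ih =>
    intro j hj
    have hlt : ∀ i ∈ Iio k, i ∈ s := fun i hi => hs (mem_Iio.1 hi).le hk
    have hnorm : ∀ i ∈ Iio k, ‖gramSchmidt ℝ f i‖ ^ 2 = ‖gramSchmidt ℝ g i‖ ^ 2 := fun i hi => by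
      rw [norm_gramSchmidt_sq, norm_gramSchmidt_sq, ih i (mem_Iio.1 hi) (hlt i hi) i (hlt i hi)]
    simp only [gramSchmidt_eq_sub_sum _ k, inner_sub_right, inner_sum, real_inner_smul_right]
    refine congrArg₂ _ (h j hj k hk) (sum_congr rfl fun i hi => ?_)
    simp only [real_inner_comm _ (gramSchmidt ℝ _ i)]
    rw [hnorm i hi, ih i (mem_Iio.1 hi) (hlt i hi) k hk, ih i (mem_Iio.1 hi) (hlt i hi) j hj]

theorem gramSchmidtNormed_eq_zero_iff (f : ι → E) (n : ι) :
    gramSchmidtNormed ℝ f n = 0 ↔ gramSchmidt ℝ f n = 0 := by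
  simp [gramSchmidtNormed, smul_eq_zero]

theorem norm_gramSchmidt_eq_of_inner_eq {s : Set ι} (hs : IsLowerSet s) {f : ι → E}
    {g : ι → F} (h : ∀ i ∈ s, ∀ j ∈ s, ⟪f i, f j⟫_ℝ = ⟪g i, g j⟫_ℝ) {k : ι} (hk : k ∈ s) :
    ‖gramSchmidt ℝ f k‖ = ‖gramSchmidt ℝ g k‖ := by
  rw [← sq_eq_sq₀ (norm_nonneg _) (norm_nonneg _), norm_gramSchmidt_sq, norm_gramSchmidt_sq,
    inner_gramSchmidt_eq_of_inner_eq hs h hk k hk]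

theorem gramSchmidtNormed_eq_zero_iff_of_inner_eq {s : Set ι} (hs : IsLowerSet s) {f : ι → E}
    {g : ι → F} (h : ∀ i ∈ s, ∀ j ∈ s, ⟪f i, f j⟫_ℝ = ⟪g i, g j⟫_ℝ) {k : ι} (hk : k ∈ s) :
    gramSchmidtNormed ℝ f k = 0 ↔ gramSchmidtNormed ℝ g k = 0 := by
  rw [gramSchmidtNormed_eq_zero_iff, gramSchmidtNormed_eq_zero_iff, ← norm_eq_zero,
    norm_gramSchmidt_eq_of_inner_eq hs h hk, norm_eq_zero]

theorem inner_gramSchmidtNormed_eq_of_inner_eq {s : Set ι} (hs : IsLowerSet s) {f : ι → E}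
    {g : ι → F} (h : ∀ i ∈ s, ∀ j ∈ s, ⟪f i, f j⟫_ℝ = ⟪g i, g j⟫_ℝ) {k : ι} (hk : k ∈ s)
    {j : ι} (hj : j ∈ s) :
    ⟪f j, gramSchmidtNormed ℝ f k⟫_ℝ = ⟪g j, gramSchmidtNormed ℝ g k⟫_ℝ := by
  simp only [gramSchmidtNormed, real_inner_smul_right]
  rw [norm_gramSchmidt_eq_of_inner_eq hs h hk, inner_gramSchmidt_eq_of_inner_eq hs h hk j hj]

theorem inner_gramSchmidtNormed_of_lt (f : ι → E) {i j : ι} (hij : i < j) :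
    ⟪f i, gramSchmidtNormed ℝ f j⟫_ℝ = 0 := by
  rw [gramSchmidtNormed, real_inner_smul_right, real_inner_comm,
    gramSchmidt_inv_triangular ℝ f hij, mul_zero]

theorem inner_gramSchmidtNormed_of_ne (f : ι → E) {k l : ι} (hkl : k ≠ l) :
    ⟪gramSchmidtNormed ℝ f k, gramSchmidtNormed ℝ f l⟫_ℝ = 0 := by
  simp [gramSchmidtNormed, real_inner_smul_left, real_inner_smul_right,
    gramSchmidt_orthogonal ℝ f hkl]

theorem norm_gramSchmidtNormed_eq_of_eq_zero_iff {κ : Type*} [LinearOrder κ]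
    [LocallyFiniteOrderBot κ] [WellFoundedLT κ] {f : ι → E} {g : κ → F} {k : ι} {l : κ}
    (h : gramSchmidtNormed ℝ f k = 0 ↔ gramSchmidtNormed ℝ g l = 0) :
    ‖gramSchmidtNormed ℝ f k‖ = ‖gramSchmidtNormed ℝ g l‖ := by
  by_cases h0 : gramSchmidtNormed ℝ f k = 0
  · rw [h0, h.1 h0, norm_zero, norm_zero]
  · rw [gramSchmidtNormed_unit_length' h0, gramSchmidtNormed_unit_length' (mt h.2 h0)]

theorem sum_inner_gramSchmidtNormed_smul [Fintype ι] {f : ι → E}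
    (hf : ⊤ ≤ Submodule.span ℝ (Set.range f)) (x : E) :
    ∑ k, ⟪gramSchmidtNormed ℝ f k, x⟫_ℝ • gramSchmidtNormed ℝ f k = x := by
  classical
  set v : {i | gramSchmidtNormed ℝ f i ≠ 0} → E := fun i => gramSchmidtNormed ℝ f i
  have hspan : ⊤ ≤ Submodule.span ℝ (Set.range v) := by
    refine hf.trans ?_
    rw [← span_gramSchmidt ℝ f, ← span_gramSchmidtNormed_range,
      ← Submodule.span_insert_zero (s := Set.range v)]
    refine Submodule.span_mono ?_
    rintro _ ⟨i, rfl⟩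
    by_cases h0 : gramSchmidtNormed ℝ f i = 0
    · exact Or.inl h0
    · exact Or.inr ⟨⟨i, h0⟩, rfl⟩
  have hb := (OrthonormalBasis.mk (gramSchmidtNormed_orthonormal' (𝕜 := ℝ) f) hspan).sum_repr' x
  simp only [OrthonormalBasis.coe_mk] at hb
  rw [← Fintype.sum_subtype_add_sum_subtype (fun i => gramSchmidtNormed ℝ f i ≠ 0),
    Fintype.sum_eq_zero (fun i : {i // ¬gramSchmidtNormed ℝ f i ≠ 0} => _)
    fun i => by rw [not_not.1 i.2, smul_zero], add_zero]
  exact hb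

section Measurable

variable [MeasurableSpace E] [BorelSpace E] [SecondCountableTopology E] {α : Type*}
  [MeasurableSpace α] {f : α → ι → E}

theorem Measurable.gramSchmidt (hf : ∀ n, Measurable fun x => f x n) (n : ι) :
    Measurable fun x => gramSchmidt ℝ (f x) n := by
  induction n using WellFoundedLT.induction with
  | _ n ih =>
    simp only [gramSchmidt_eq_sub_sum _ n]
    refine (hf n).sub (Finset.measurable_sum _ fun i hi => ?_)
    have hi := ih i (mem_Iio.1 hi)
    exact ((hi.inner (hf n)).div (hi.norm.pow_const 2)).smul hi

theorem Measurable.gramSchmidtNormed (hf : ∀ n, Measurable fun x => f x n) (n : ι) :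
    Measurable fun x => gramSchmidtNormed ℝ (f x) n :=
  (Measurable.gramSchmidt hf n).norm.inv.smul (Measurable.gramSchmidt hf n)

end Measurable

end GramSchmidt

section MatchingPerm

variable {α : Type*} [Fintype α] [DecidableEq α]

noncomputable def matchingPerm (s t : Finset α) : Equiv.Perm α :=
  if h : #s = #t then (s.equivOfCardEq h).extendSubtype else 1

theorem matchingPerm_mem_iff {s t : Finset α} (h : #s = #t) (a : α) :
    matchingPerm s t a ∈ t ↔ a ∈ s := by
  rw [matchingPerm, dif_pos h]
  exact ⟨fun ht => not_not.1 fun hs => Equiv.extendSubtype_not_mem _ a hs ht,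
    Equiv.extendSubtype_mem _ a⟩

end MatchingPerm

section OrthogonalOfFrames

variable {K n R : Type*} [Fintype K] [Fintype n] [DecidableEq n] [CommSemiring R]
  {A B : Matrix K n R}

theorem transpose_mul_mul_transpose_eq_one (hA : Aᵀ * A = 1) (hAB : A * Aᵀ = B * Bᵀ) :
    Aᵀ * B * (Aᵀ * B)ᵀ = 1 := by
  rw [transpose_mul, transpose_transpose, Matrix.mul_assoc, ← Matrix.mul_assoc B, ← hAB,
    ← Matrix.mul_assoc, ← Matrix.mul_assoc, hA, Matrix.one_mul, hA]

theorem mul_transpose_mul_eq_of_mul_transpose_eq {l : Type*} [Fintype l] {N N' : Matrix l n R}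
    (hB : Bᵀ * B = 1) (h : N * Aᵀ = N' * Bᵀ) : N * (Aᵀ * B) = N' := by
  rw [← Matrix.mul_assoc, h, Matrix.mul_assoc, hB, Matrix.mul_one]

end OrthogonalOfFrames

section Frame

variable {d m : ℕ}

theorem isLowerSet_range_castAdd :
    IsLowerSet (Set.range (Fin.castAdd m : Fin d → Fin (d + m))) := by
  rintro _ b hb ⟨i, rfl⟩
  exact ⟨⟨b, lt_of_le_of_lt (Fin.le_def.1 hb) i.2⟩, rfl⟩

noncomputable def rowsThenBasis (σ : Matrix (Fin d) (Fin m) ℝ) :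
    Fin (d + m) → EuclideanSpace ℝ (Fin m) :=
  Fin.append (fun i => WithLp.toLp 2 (σ i)) (EuclideanSpace.basisFun (Fin m) ℝ)

noncomputable def frameVec (σ : Matrix (Fin d) (Fin m) ℝ) (k : Fin d ⊕ Fin m) :
    EuclideanSpace ℝ (Fin m) :=
  gramSchmidtNormed ℝ (rowsThenBasis σ) (finSumFinEquiv k)

noncomputable def frame (σ : Matrix (Fin d) (Fin m) ℝ) : Matrix (Fin d ⊕ Fin m) (Fin m) ℝ :=
  Matrix.of fun k => WithLp.ofLp (frameVec σ k)

theorem top_le_span_rowsThenBasis (σ : Matrix (Fin d) (Fin m) ℝ) :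
    ⊤ ≤ Submodule.span ℝ (Set.range (rowsThenBasis σ)) := by
  rw [← (EuclideanSpace.basisFun (Fin m) ℝ).toBasis.span_eq]
  refine Submodule.span_mono ?_
  rintro _ ⟨j, rfl⟩
  exact ⟨Fin.natAdd d j, by simp [rowsThenBasis]⟩

theorem inner_rowsThenBasis_castAdd (σ : Matrix (Fin d) (Fin m) ℝ) (i j : Fin d) :
    ⟪rowsThenBasis σ (Fin.castAdd m i), rowsThenBasis σ (Fin.castAdd m j)⟫_ℝ = (σ * σᵀ) i j := by
  simp [rowsThenBasis, EuclideanSpace.inner_toLp_toLp, Matrix.mul_apply, dotProduct, mul_comm]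

theorem mul_transpose_frame_apply (N : Matrix (Fin d) (Fin m) ℝ)
    (σ : Matrix (Fin d) (Fin m) ℝ) (i : Fin d) (k : Fin d ⊕ Fin m) :
    (N * (frame σ)ᵀ) i k = ⟪rowsThenBasis N (Fin.castAdd m i), frameVec σ k⟫_ℝ := by
  simp [frame, rowsThenBasis, EuclideanSpace.inner_eq_star_dotProduct, Matrix.mul_apply,
    dotProduct, mul_comm]

theorem frame_mul_transpose_apply (σ σ' : Matrix (Fin d) (Fin m) ℝ) (k l : Fin d ⊕ Fin m) :
    (frame σ * (frame σ')ᵀ) k l = ⟪frameVec σ k, frameVec σ' l⟫_ℝ := by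
  simp [frame, EuclideanSpace.inner_eq_star_dotProduct, Matrix.mul_apply, dotProduct, mul_comm]

theorem frame_transpose_mul_self (σ : Matrix (Fin d) (Fin m) ℝ) : (frame σ)ᵀ * frame σ = 1 := by
  ext p q
  have h := congrArg (· p) (sum_inner_gramSchmidtNormed_smul (top_le_span_rowsThenBasis σ)
    (EuclideanSpace.single q 1))
  simp only [EuclideanSpace.inner_single_right, ← finSumFinEquiv.sum_comp] at h
  simpa [frame, frameVec, Matrix.mul_apply, Matrix.one_apply, eq_comm, mul_comm] using h

theorem inner_rowsThenBasis_eq_of_gram_eq {σ σ' : Matrix (Fin d) (Fin m) ℝ}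
    (hG : σ * σᵀ = σ' * σ'ᵀ) :
    ∀ i ∈ Set.range (Fin.castAdd m), ∀ j ∈ Set.range (Fin.castAdd m),
      ⟪rowsThenBasis σ i, rowsThenBasis σ j⟫_ℝ = ⟪rowsThenBasis σ' i, rowsThenBasis σ' j⟫_ℝ := by
  rintro _ ⟨i, rfl⟩ _ ⟨j, rfl⟩
  rw [inner_rowsThenBasis_castAdd, inner_rowsThenBasis_castAdd, hG]

theorem inner_frameVec_inl_eq_of_gram_eq {σ σ' : Matrix (Fin d) (Fin m) ℝ}
    (hG : σ * σᵀ = σ' * σ'ᵀ) (i k : Fin d) :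
    ⟪rowsThenBasis σ (Fin.castAdd m i), frameVec σ (.inl k)⟫_ℝ =
      ⟪rowsThenBasis σ' (Fin.castAdd m i), frameVec σ' (.inl k)⟫_ℝ :=
  inner_gramSchmidtNormed_eq_of_inner_eq isLowerSet_range_castAdd
    (inner_rowsThenBasis_eq_of_gram_eq hG) ⟨k, rfl⟩ ⟨i, rfl⟩

theorem frameVec_inl_eq_zero_iff_of_gram_eq {σ σ' : Matrix (Fin d) (Fin m) ℝ}
    (hG : σ * σᵀ = σ' * σ'ᵀ) (k : Fin d) :
    frameVec σ (.inl k) = 0 ↔ frameVec σ' (.inl k) = 0 :=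
  gramSchmidtNormed_eq_zero_iff_of_inner_eq isLowerSet_range_castAdd
    (inner_rowsThenBasis_eq_of_gram_eq hG) ⟨k, rfl⟩

theorem inner_frameVec_inr (σ : Matrix (Fin d) (Fin m) ℝ) (i : Fin d) (j : Fin m) :
    ⟪rowsThenBasis σ (Fin.castAdd m i), frameVec σ (.inr j)⟫_ℝ = 0 :=
  inner_gramSchmidtNormed_of_lt _ (by
    rw [finSumFinEquiv_apply_right, Fin.lt_def, Fin.val_castAdd, Fin.val_natAdd]; omega)

theorem inner_frameVec_of_ne (σ : Matrix (Fin d) (Fin m) ℝ) {k l : Fin d ⊕ Fin m} (hkl : k ≠ l) :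
    ⟪frameVec σ k, frameVec σ l⟫_ℝ = 0 :=
  inner_gramSchmidtNormed_of_ne _ (finSumFinEquiv.injective.ne hkl)

theorem sum_norm_frameVec_sq (σ : Matrix (Fin d) (Fin m) ℝ) :
    ∑ k, ‖frameVec σ k‖ ^ 2 = m := by
  have h := Matrix.trace_mul_comm (frame σ) (frame σ)ᵀ
  rw [frame_transpose_mul_self, Matrix.trace_one, Fintype.card_fin] at h
  simp only [Matrix.trace, Matrix.diag, frame_mul_transpose_apply, real_inner_self_eq_norm_sq] at h
  exact h

theorem norm_frameVec_sq (σ : Matrix (Fin d) (Fin m) ℝ) (k : Fin d ⊕ Fin m)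
    [Decidable (frameVec σ k ≠ 0)] :
    ‖frameVec σ k‖ ^ 2 = if frameVec σ k ≠ 0 then 1 else 0 := by
  split_ifs with h
  · rw [frameVec, gramSchmidtNormed_unit_length' h, one_pow]
  · rw [not_not.1 h, norm_zero, sq, zero_mul]

open scoped Classical in
noncomputable def tailSupport (σ : Matrix (Fin d) (Fin m) ℝ) : Finset (Fin m) :=
  {j | frameVec σ (.inr j) ≠ 0}

theorem mem_tailSupport {σ : Matrix (Fin d) (Fin m) ℝ} {j : Fin m} :
    j ∈ tailSupport σ ↔ frameVec σ (.inr j) ≠ 0 := by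
  simp [tailSupport]

theorem card_tailSupport (σ : Matrix (Fin d) (Fin m) ℝ) :
    (#(tailSupport σ) : ℝ) = m - ∑ k, ‖frameVec σ (.inl k)‖ ^ 2 := by
  classical
  rw [eq_sub_iff_add_eq', ← sum_norm_frameVec_sq σ, Fintype.sum_sum_type, tailSupport,
    Finset.natCast_card_filter]
  congr 1
  refine sum_congr rfl fun j _ => ?_
  rw [norm_frameVec_sq]

theorem card_tailSupport_eq_of_gram_eq {σ σ' : Matrix (Fin d) (Fin m) ℝ}
    (hG : σ * σᵀ = σ' * σ'ᵀ) : #(tailSupport σ) = #(tailSupport σ') := by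
  have hhead : ∀ k, ‖frameVec σ (.inl k)‖ = ‖frameVec σ' (.inl k)‖ := fun k =>
    norm_gramSchmidtNormed_eq_of_eq_zero_iff (frameVec_inl_eq_zero_iff_of_gram_eq hG k)
  have h : (#(tailSupport σ) : ℝ) = #(tailSupport σ') := by
    rw [card_tailSupport, card_tailSupport]
    simp only [hhead]
  exact_mod_cast h

theorem frameVec_eq_zero_iff_of_gram_eq {σ σ' : Matrix (Fin d) (Fin m) ℝ}
    (hG : σ * σᵀ = σ' * σ'ᵀ) (k : Fin d ⊕ Fin m) :
    frameVec σ k = 0 ↔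
      frameVec σ' (Equiv.sumCongr (Equiv.refl (Fin d))
        (matchingPerm (tailSupport σ) (tailSupport σ')) k) = 0 := by
  rcases k with k | j
  · exact frameVec_inl_eq_zero_iff_of_gram_eq hG k
  · have h := matchingPerm_mem_iff (card_tailSupport_eq_of_gram_eq hG) j
    rw [mem_tailSupport, mem_tailSupport] at h
    exact (not_iff_not.1 h).symm

noncomputable def permutedFrame (τ : Equiv.Perm (Fin m)) (σ : Matrix (Fin d) (Fin m) ℝ) :
    Matrix (Fin d ⊕ Fin m) (Fin m) ℝ :=
  (frame σ).submatrix (Equiv.sumCongr (Equiv.refl (Fin d)) τ) id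

theorem permutedFrame_transpose_mul_self (τ : Equiv.Perm (Fin m))
    (σ : Matrix (Fin d) (Fin m) ℝ) : (permutedFrame τ σ)ᵀ * permutedFrame τ σ = 1 := by
  rw [permutedFrame, transpose_submatrix, submatrix_mul_equiv, frame_transpose_mul_self,
    submatrix_id_id]

theorem frame_mul_transpose_eq_of_gram_eq {σ σ' : Matrix (Fin d) (Fin m) ℝ}
    (hG : σ * σᵀ = σ' * σ'ᵀ) :
    frame σ * (frame σ)ᵀ =
      permutedFrame (matchingPerm (tailSupport σ) (tailSupport σ')) σ' *
        (permutedFrame (matchingPerm (tailSupport σ) (tailSupport σ')) σ')ᵀ := by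
  rw [permutedFrame, transpose_submatrix, ← submatrix_mul _ _ _ _ _ Function.bijective_id]
  ext k l
  rw [submatrix_apply, frame_mul_transpose_apply, frame_mul_transpose_apply]
  rcases eq_or_ne k l with rfl | hkl
  · rw [real_inner_self_eq_norm_sq, real_inner_self_eq_norm_sq]
    exact congrArg (· ^ 2)
      (norm_gramSchmidtNormed_eq_of_eq_zero_iff (frameVec_eq_zero_iff_of_gram_eq hG k))
  · rw [inner_frameVec_of_ne σ hkl, inner_frameVec_of_ne σ' ((Equiv.injective _).ne hkl)]

theorem mul_transpose_frame_eq_of_gram_eq {σ σ' : Matrix (Fin d) (Fin m) ℝ}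
    (hG : σ * σᵀ = σ' * σ'ᵀ) :
    σ * (frame σ)ᵀ =
      σ' * (permutedFrame (matchingPerm (tailSupport σ) (tailSupport σ')) σ')ᵀ := by
  have h := submatrix_mul σ' (frame σ')ᵀ id id
    (Equiv.sumCongr (Equiv.refl (Fin d)) (matchingPerm (tailSupport σ) (tailSupport σ')))
    Function.bijective_id
  rw [submatrix_id_id] at h
  rw [permutedFrame, transpose_submatrix, ← h]
  ext i (k | j)
  · rw [submatrix_apply, mul_transpose_frame_apply, mul_transpose_frame_apply]
    exact inner_frameVec_inl_eq_of_gram_eq hG i k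
  · rw [submatrix_apply, mul_transpose_frame_apply, mul_transpose_frame_apply]
    simp only [Equiv.sumCongr_apply, Sum.map_inr, id, inner_frameVec_inr]

noncomputable def orthogonalSelection
    (x : Matrix (Fin d) (Fin m) ℝ × Matrix (Fin d) (Fin m) ℝ) : Matrix (Fin m) (Fin m) ℝ :=
  (frame x.1)ᵀ * permutedFrame (matchingPerm (tailSupport x.1) (tailSupport x.2)) x.2

theorem orthogonalSelection_spec {σ σ' : Matrix (Fin d) (Fin m) ℝ} (hG : σ * σᵀ = σ' * σ'ᵀ) :
    orthogonalSelection (σ, σ') * (orthogonalSelection (σ, σ'))ᵀ = 1 ∧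
      σ * orthogonalSelection (σ, σ') = σ' :=
  ⟨transpose_mul_mul_transpose_eq_one (frame_transpose_mul_self σ)
      (frame_mul_transpose_eq_of_gram_eq hG),
    mul_transpose_mul_eq_of_mul_transpose_eq (permutedFrame_transpose_mul_self _ σ')
      (mul_transpose_frame_eq_of_gram_eq hG)⟩

end Frame

section Measurability

variable {d m : ℕ}

instance matrixBorelSpace : BorelSpace (Matrix (Fin d) (Fin m) ℝ) := ⟨rfl⟩

theorem measurable_matrix_of_apply {α : Type*} [MeasurableSpace α]
    {f : α → Matrix (Fin d) (Fin m) ℝ} (h : ∀ i j, Measurable fun x => f x i j) :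
    Measurable f := by
  have hpi : (matrixMeasurableSpace : MeasurableSpace (Matrix (Fin d) (Fin m) ℝ)) =
      MeasurableSpace.pi :=
    (BorelSpace.measurable_eq (α := Fin d → Fin m → ℝ)).symm
  rw [hpi]
  exact measurable_pi_iff.2 fun i => measurable_pi_iff.2 (h i)

theorem measurable_rowsThenBasis (n : Fin (d + m)) :
    Measurable fun σ : Matrix (Fin d) (Fin m) ℝ => rowsThenBasis σ n := by
  induction n using Fin.addCases with
  | left i =>
    simp only [rowsThenBasis, Fin.append_left]
    exact ((PiLp.continuous_toLp 2 _).comp (continuous_apply i)).measurable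
  | right j =>
    simp only [rowsThenBasis, Fin.append_right]
    exact measurable_const

theorem measurable_frame_apply (k : Fin d ⊕ Fin m) (p : Fin m) :
    Measurable fun σ : Matrix (Fin d) (Fin m) ℝ => frame σ k p :=
  (measurable_pi_apply p).comp ((WithLp.measurable_ofLp _ _).comp
    (Measurable.gramSchmidtNormed measurable_rowsThenBasis _))

theorem measurable_transpose_frame_mul_permutedFrame (τ : Equiv.Perm (Fin m)) :
    Measurable fun x : Matrix (Fin d) (Fin m) ℝ × Matrix (Fin d) (Fin m) ℝ =>
      (frame x.1)ᵀ * permutedFrame τ x.2 := by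
  refine measurable_matrix_of_apply fun p q => ?_
  simp only [permutedFrame, mul_apply, transpose_apply, submatrix_apply, id]
  exact Finset.measurable_sum _ fun k _ =>
    ((measurable_frame_apply k p).comp measurable_fst).mul
      ((measurable_frame_apply _ q).comp measurable_snd)

theorem measurable_tailSupport :
    Measurable (tailSupport : Matrix (Fin d) (Fin m) ℝ → Finset (Fin m)) := by
  refine measurable_finset_iff.2 fun j => ?_
  simp only [mem_tailSupport]
  exact measurableSet_setOfPred.1 ((measurableSet_singleton 0).compl.preimage
    (Measurable.gramSchmidtNormed measurable_rowsThenBasis _))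

theorem measurable_orthogonalSelection :
    Measurable (orthogonalSelection : Matrix (Fin d) (Fin m) ℝ × Matrix (Fin d) (Fin m) ℝ → _) := by
  have h : Measurable fun y : (Matrix (Fin d) (Fin m) ℝ × Matrix (Fin d) (Fin m) ℝ) ×
      (Finset (Fin m) × Finset (Fin m)) =>
        (frame y.1.1)ᵀ * permutedFrame (matchingPerm y.2.1 y.2.2) y.1.2 :=
    measurable_from_prod_countable_left fun st =>
      measurable_transpose_frame_mul_permutedFrame (matchingPerm st.1 st.2)
  apply h.comp (measurable_id.prodMk ((measurable_tailSupport.comp measurable_fst).prodMk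
    (measurable_tailSupport.comp measurable_snd)))

end Measurability

theorem stmt2_general {d m : ℕ} :
    ∃ S : Matrix (Fin d) (Fin m) ℝ × Matrix (Fin d) (Fin m) ℝ →
        Matrix (Fin m) (Fin m) ℝ,
      Measurable S ∧
      ∀ σ σ' : Matrix (Fin d) (Fin m) ℝ, σ * σᵀ = σ' * σ'ᵀ →
        S (σ, σ') * (S (σ, σ'))ᵀ = 1 ∧ σ * S (σ, σ') = σ' :=
  ⟨orthogonalSelection, measurable_orthogonalSelection, fun _ _ => orthogonalSelection_spec⟩

/-- There is a Borel-measurable map `Σ` assigning to each pair `(σ, σ̄)` of real `d × m`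
matrices with `σσᵀ = σ̄σ̄ᵀ` an orthogonal matrix `U = Σ(σ, σ̄)` (i.e. `UUᵀ = 1`) such
that `σU = σ̄`. -/
theorem stmt2 {d m : ℕ} (hd : 1 ≤ d) (hm : 1 ≤ m) :
    ∃ S : Matrix (Fin d) (Fin m) ℝ × Matrix (Fin d) (Fin m) ℝ →
        Matrix (Fin m) (Fin m) ℝ,
      Measurable S ∧
      ∀ σ σ' : Matrix (Fin d) (Fin m) ℝ, σ * σᵀ = σ' * σ'ᵀ →
        S (σ, σ') * (S (σ, σ'))ᵀ = 1 ∧ σ * S (σ, σ') = σ' :=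
  stmt2_general
end

section
/- Let A be the free associative unital ℝ-algebra on three generators a, b, c, and let π : A → A be the unique ℝ-algebra homomorphism determined on generators by π(a) = a, π(b) = (1/2)·(b − c + a), π(c) = (1/2)·(c − b + a). Then for every P ∈ A, the element P − π(P) belongs to the two-sided ideal of A generated by a − b − c. -/
/-- Let `π` be the algebra endomorphism of the free associative unital `ℝ`-algebra on three
generators `a, b, c` determined by `π(a) = a`, `π(b) = ½(b − c + a)`, `π(c) = ½(c − b + a)`.
Then for every `P`, the element `P − π(P)` belongs to the two-sided ideal generated by
`a − b − c`. -/
theorem stmt7 (π : FreeAlgebra ℝ (Fin 3) →ₐ[ℝ] FreeAlgebra ℝ (Fin 3))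
    (ha : π (FreeAlgebra.ι ℝ 0) = FreeAlgebra.ι ℝ 0)
    (hb : π (FreeAlgebra.ι ℝ 1)
        = (1 / 2 : ℝ) • (FreeAlgebra.ι ℝ 1 - FreeAlgebra.ι ℝ 2 + FreeAlgebra.ι ℝ 0))
    (hc : π (FreeAlgebra.ι ℝ 2)
        = (1 / 2 : ℝ) • (FreeAlgebra.ι ℝ 2 - FreeAlgebra.ι ℝ 1 + FreeAlgebra.ι ℝ 0)) :
    ∀ P : FreeAlgebra ℝ (Fin 3),
      P - π P ∈ TwoSidedIdeal.span
        ({FreeAlgebra.ι ℝ 0 - FreeAlgebra.ι ℝ 1 - FreeAlgebra.ι ℝ 2} :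
          Set (FreeAlgebra ℝ (Fin 3))) := by
  set I := TwoSidedIdeal.span
        ({FreeAlgebra.ι ℝ 0 - FreeAlgebra.ι ℝ 1 - FreeAlgebra.ι ℝ 2} :
          Set (FreeAlgebra ℝ (Fin 3))) with hI
  have hg : FreeAlgebra.ι ℝ 0 - FreeAlgebra.ι ℝ 1 - FreeAlgebra.ι ℝ 2 ∈ I :=
    TwoSidedIdeal.subset_span rfl
  have hsmul : ∀ (r : ℝ) (x : FreeAlgebra ℝ (Fin 3)), x ∈ I → r • x ∈ I := by
    intro r x hx
    rw [Algebra.smul_def]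
    exact I.mul_mem_left _ _ hx
  intro P
  induction P with
  | grade0 r => simp [AlgHom.commutes]
  | grade1 x =>
    have hx : x = 0 ∨ x = 1 ∨ x = 2 := by omega
    rcases hx with rfl | rfl | rfl
    · simp [ha]
    · rw [hb]
      have : FreeAlgebra.ι ℝ (1 : Fin 3) -
          (1 / 2 : ℝ) • (FreeAlgebra.ι ℝ 1 - FreeAlgebra.ι ℝ 2 + FreeAlgebra.ι ℝ 0)
          = (-(1/2) : ℝ) • (FreeAlgebra.ι ℝ 0 - FreeAlgebra.ι ℝ 1 - FreeAlgebra.ι ℝ 2) := by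
        rw [smul_sub, smul_sub, smul_add, smul_sub]
        module
      rw [this]
      exact hsmul _ _ hg
    · rw [hc]
      have : FreeAlgebra.ι ℝ (2 : Fin 3) -
          (1 / 2 : ℝ) • (FreeAlgebra.ι ℝ 2 - FreeAlgebra.ι ℝ 1 + FreeAlgebra.ι ℝ 0)
          = (-(1/2) : ℝ) • (FreeAlgebra.ι ℝ 0 - FreeAlgebra.ι ℝ 1 - FreeAlgebra.ι ℝ 2) := by
        module
      rw [this]
      exact hsmul _ _ hg
  | mul x y hx hy =>
    have : x * y - π (x * y) = (x - π x) * y + π x * (y - π y) := by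
      rw [map_mul, sub_mul, mul_sub]; abel
    rw [this]
    exact I.add_mem (I.mul_mem_right _ _ hx) (I.mul_mem_left _ _ hy)
  | add x y hx hy =>
    have : x + y - π (x + y) = (x - π x) + (y - π y) := by
      rw [map_add]; abel
    rw [this]
    exact I.add_mem hx hy
end

section
/- Let E be a finite-dimensional real inner product space, ι a finite index type, and (e_i)_{i∈ι} an orthonormal basis of E. Let π : E → E be twice continuously differentiable at a point x ∈ E (ContDiffAt ℝ 2 π x), and set P := Dπ(x) (the Fréchet derivative of π at x). Assume P is idempotent (P ∘ P = P) and self-adjoint (⟪Pu, v⟫ = ⟪u, Pv⟫ for all u, v ∈ E). Define σ_i : E → E by σ_i(y) := Dπ(y)(e_i). Then: (a) for all u ∈ E, Σ_{i∈ι} ⟪σ_i(x), u⟫ • σ_i(x) = P(u) (equivalently, Σ_i ⟪σ_i(x),u⟫⟪σ_i(x),v⟫ = ⟪Pu, v⟫ for all u, v); and (b) Σ_{i∈ι} [ (Dσ_i)(x)(σ_i(x)) − (D(Dπ))(x)(σ_i(x))(σ_i(x)) ] = 0, where D(Dπ)(x) := fderiv ℝ (fderiv ℝ π) x. -/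
/-!
Expanding `T eᵢ` in the orthonormal basis and using self-adjointness moves `T` from one slot of
a bilinear map to the other in the trace-like sum `∑ᵢ B (T eᵢ) eᵢ`; together with `T ∘ T = T`
this gives `∑ᵢ B (P eᵢ) (P eᵢ) = ∑ᵢ B (P eᵢ) eᵢ`. Part (b) is this identity for `B = D²π(x)`,
since `Dσᵢ(x) v = D²π(x) v eᵢ`.
-/

open scoped RealInnerProductSpace

namespace OrthonormalBasis

variable {E F ι : Type*} [NormedAddCommGroup E] [InnerProductSpace ℝ E] [Fintype ι]
  [AddCommGroup F] [Module ℝ F] (e : OrthonormalBasis ι ℝ E) {T : E →ₗ[ℝ] E}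

theorem sum_inner_smul_eq_apply_apply_of_isSymmetric (hT : T.IsSymmetric) (u : E) :
    ∑ i, ⟪T (e i), u⟫ • T (e i) = T (T u) := by
  simp_rw [hT _ u, ← map_smul, ← map_sum, e.sum_repr']

theorem sum_bilin_map_left_eq_sum_bilin_map_right_of_isSymmetric (hT : T.IsSymmetric)
    (B : E →ₗ[ℝ] E →ₗ[ℝ] F) :
    ∑ i, B (T (e i)) (e i) = ∑ i, B (e i) (T (e i)) := by
  calc ∑ i, B (T (e i)) (e i)
      = ∑ i, ∑ j, ⟪e j, T (e i)⟫ • B (e j) (e i) := by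
        refine Finset.sum_congr rfl fun i _ => ?_
        conv_lhs => rw [← e.sum_repr' (T (e i))]
        simp only [map_sum, map_smul, LinearMap.sum_apply, LinearMap.smul_apply]
    _ = ∑ j, ∑ i, ⟪e i, T (e j)⟫ • B (e j) (e i) := by
        rw [Finset.sum_comm]
        refine Finset.sum_congr rfl fun j _ => Finset.sum_congr rfl fun i _ => ?_
        rw [← hT, real_inner_comm]
    _ = ∑ j, B (e j) (T (e j)) := by
        simp_rw [← map_smul, ← map_sum, e.sum_repr']

theorem sum_bilin_map_map_eq_sum_bilin_map_left_of_isSymmetric (hT : T.IsSymmetric)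
    (hT₂ : ∀ u, T (T u) = T u) (B : E →ₗ[ℝ] E →ₗ[ℝ] F) :
    ∑ i, B (T (e i)) (T (e i)) = ∑ i, B (T (e i)) (e i) := by
  calc ∑ i, B (T (e i)) (T (e i)) = ∑ i, B.compl₂ T (T (e i)) (e i) := rfl
    _ = ∑ i, B (e i) (T (T (e i))) :=
        e.sum_bilin_map_left_eq_sum_bilin_map_right_of_isSymmetric hT _
    _ = ∑ i, B (T (e i)) (e i) := by
        simp_rw [hT₂, e.sum_bilin_map_left_eq_sum_bilin_map_right_of_isSymmetric hT]

end OrthonormalBasis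

theorem fderiv_fderiv_apply {𝕜 E F : Type*} [NontriviallyNormedField 𝕜] [NormedAddCommGroup E]
    [NormedSpace 𝕜 E] [NormedAddCommGroup F] [NormedSpace 𝕜 F] {f : E → F} {x : E}
    (hf : DifferentiableAt 𝕜 (fderiv 𝕜 f) x) (v w : E) :
    fderiv 𝕜 (fun y => fderiv 𝕜 f y v) x w = fderiv 𝕜 (fderiv 𝕜 f) x w v := by
  simp [fderiv_clm_apply hf (differentiableAt_const v)]

theorem stmt9_general {E : Type*} [NormedAddCommGroup E] [InnerProductSpace ℝ E]
    {ι : Type*} [Fintype ι] (e : OrthonormalBasis ι ℝ E)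
    (π : E → E) (x : E) (hπ : ContDiffAt ℝ 2 π x)
    (P : E →L[ℝ] E) (hP : P = fderiv ℝ π x)
    (hidem : ∀ u : E, P (P u) = P u)
    (hsym : ∀ u v : E, ⟪P u, v⟫ = ⟪u, P v⟫)
    (σ : ι → E → E) (hσ : ∀ i y, σ i y = fderiv ℝ π y (e i)) :
    (∀ u : E, ∑ i, ⟪σ i x, u⟫ • σ i x = P u) ∧
    (∑ i, (fderiv ℝ (σ i) x (σ i x)
        - fderiv ℝ (fderiv ℝ π) x (σ i x) (σ i x)) = 0) := by
  obtain rfl : σ = fun i y => fderiv ℝ π y (e i) := funext₂ hσ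
  subst hP
  have hd : DifferentiableAt ℝ (fderiv ℝ π) x :=
    (hπ.fderiv_right le_rfl).differentiableAt one_ne_zero
  have hT : (fderiv ℝ π x : E →ₗ[ℝ] E).IsSymmetric := hsym
  refine ⟨fun u => ?_, ?_⟩
  · exact (e.sum_inner_smul_eq_apply_apply_of_isSymmetric hT u).trans (hidem u)
  · simp_rw [fderiv_fderiv_apply hd, Finset.sum_sub_distrib, sub_eq_zero]
    exact (e.sum_bilin_map_map_eq_sum_bilin_map_left_of_isSymmetric hT hidem
      (fderiv ℝ (fderiv ℝ π) x).toLinearMap₁₂).symm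

/-- Extrinsic form of Lemma `lem:propSigmai` of the paper: if `π : E → E` is `C²` at `x`
with derivative `P = Dπ(x)` a self-adjoint idempotent, and `σ_i(y) := Dπ(y)(e_i)` for an
orthonormal basis `(e_i)`, then (a) `∑_i ⟪σ_i(x), ·⟫ σ_i(x) = P`, and
(b) `∑_i [Dσ_i(x)(σ_i(x)) − D²π(x)(σ_i(x), σ_i(x))] = 0`. -/
theorem stmt9 {E : Type*} [NormedAddCommGroup E] [InnerProductSpace ℝ E]
    [FiniteDimensional ℝ E]
    {ι : Type*} [Fintype ι] (e : OrthonormalBasis ι ℝ E)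
    (π : E → E) (x : E) (hπ : ContDiffAt ℝ 2 π x)
    (P : E →L[ℝ] E) (hP : P = fderiv ℝ π x)
    (hidem : ∀ u : E, P (P u) = P u)
    (hsym : ∀ u v : E, ⟪P u, v⟫ = ⟪u, P v⟫)
    (σ : ι → E → E) (hσ : ∀ i y, σ i y = fderiv ℝ π y (e i)) :
    (∀ u : E, ∑ i, ⟪σ i x, u⟫ • σ i x = P u) ∧
    (∑ i, (fderiv ℝ (σ i) x (σ i x)
        - fderiv ℝ (fderiv ℝ π) x (σ i x) (σ i x)) = 0) :=
  stmt9_general e π x hπ P hP hidem hsym σ hσ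
end
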